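/- Let ⊙ be a non-degenerate pseudo-multiplication (i.e., O(1_⊙) = 0). For t ∈ [0,∞], the following are equivalent: (1) t is ⊙-finite; (2) s ⊙ t is ⊙-finite for some s > 0; (3) s ⊙ t ≤ 1_⊙ for some s > 0; (4) t ⊙ s' ≤ 1_⊙ for some s' > 0; (5) t ⊙ s' is ⊙-finite for some s' > 0. -/

import Mathlib

open Set Filter Topology
open scoped ENNReal

/-- A pseudo-multiplication on `[0,∞]`. -/
structure PseudoMul where
  mul : ℝ≥0∞ → ℝ≥0∞ → ℝ≥0∞
  assoc : ∀ a b c, mul (mul a b) c = mul a (mul b c)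
  continuousOn : ContinuousOn (fun p : ℝ≥0∞ × ℝ≥0∞ => mul p.1 p.2) (Ioo 0 ⊤ ×ˢ univ)
  continuousOn_left : ∀ t, ContinuousOn (fun s => mul s t) (Ioi 0)
  mono : ∀ ⦃a b : ℝ≥0∞⦄, a ≤ b → ∀ ⦃c d : ℝ≥0∞⦄, c ≤ d → mul a c ≤ mul b d
  one : ℝ≥0∞
  one_mul : ∀ t, mul one t = t
  eq_zero_of_mul : ∀ s t, mul s t = 0 → s = 0 ∨ t = 0
  zero_mul : ∀ t, mul 0 t = 0
  mul_zero : ∀ t, mul t 0 = 0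

/-- The kernel `O(t) = ⨅_{s>0} s ⊙ t`. -/
noncomputable def PseudoMul.O (P : PseudoMul) (t : ℝ≥0∞) : ℝ≥0∞ :=
  ⨅ s ∈ Ioi (0 : ℝ≥0∞), P.mul s t

/-!
Finiteness transfers between `t` and `s ⊙ t` because `O t ≤ O (s ⊙ t)`, and between `t` and
`t ⊙ s'` because `O t ⊙ s' ≤ O (t ⊙ s')` and there are no zero divisors. Non-degeneracy makes
everything below `1_⊙` finite, and `O t = 0` pushes some `s ⊙ t` below `1_⊙`. Finally, if
`s ⊙ t ≤ 1_⊙` but `t ⊙ s' > 1_⊙` for all `s' > 0`, associativity gives `s ⊙ 1_⊙ ≤ s'` for all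
`s' > 0`, i.e. `s ⊙ 1_⊙ = 0`.
-/

namespace PseudoMul

variable (P : PseudoMul)

lemma one_pos : 0 < P.one :=
  pos_iff_ne_zero.2 fun h =>
    (one_ne_zero : (1 : ℝ≥0∞) ≠ 0) (by simpa [h, P.zero_mul] using (P.one_mul 1).symm)

lemma mul_pos {a b : ℝ≥0∞} (ha : 0 < a) (hb : 0 < b) : 0 < P.mul a b := by
  refine pos_iff_ne_zero.2 fun h => ?_
  rcases P.eq_zero_of_mul a b h with rfl | rfl
  exacts [ha.false, hb.false]

lemma O_le {s : ℝ≥0∞} (hs : 0 < s) (t : ℝ≥0∞) : P.O t ≤ P.mul s t :=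
  iInf₂_le s hs

lemma O_mono {a b : ℝ≥0∞} (hab : a ≤ b) : P.O a ≤ P.O b :=
  iInf₂_mono fun _ _ => P.mono le_rfl hab

lemma O_eq_zero_of_le_one (hnd : P.O P.one = 0) {t : ℝ≥0∞} (ht : t ≤ P.one) : P.O t = 0 :=
  nonpos_iff_eq_zero.1 (hnd ▸ P.O_mono ht)

lemma O_le_O_mul {s : ℝ≥0∞} (hs : 0 < s) (t : ℝ≥0∞) : P.O t ≤ P.O (P.mul s t) :=
  le_iInf₂ fun r hr => (P.O_le (P.mul_pos hr hs) t).trans_eq (P.assoc r s t)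

lemma mul_O_le_O_mul (t s : ℝ≥0∞) : P.mul (P.O t) s ≤ P.O (P.mul t s) :=
  le_iInf₂ fun r hr => (P.mono (P.O_le hr t) le_rfl).trans_eq (P.assoc r t s)

lemma exists_mul_le_one_of_O_eq_zero {t : ℝ≥0∞} (h : P.O t = 0) :
    ∃ s > (0 : ℝ≥0∞), P.mul s t ≤ P.one := by
  by_contra! hc
  have : P.one ≤ P.O t := le_iInf₂ fun s hs => (hc s hs).le
  exact P.one_pos.not_ge (h ▸ this)

lemma mul_one_le_of_one_le_mul {s t s' : ℝ≥0∞} (hst : P.mul s t ≤ P.one)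
    (hts' : P.one ≤ P.mul t s') : P.mul s P.one ≤ s' :=
  calc P.mul s P.one ≤ P.mul s (P.mul t s') := P.mono le_rfl hts'
    _ = P.mul (P.mul s t) s' := (P.assoc s t s').symm
    _ ≤ P.mul P.one s' := P.mono hst le_rfl
    _ = s' := P.one_mul s'

/-- Any `s'` strictly between `0` and `s ⊙ 1_⊙` works. -/
lemma exists_mul_right_le_one {s t : ℝ≥0∞} (hs : 0 < s) (hst : P.mul s t ≤ P.one) :
    ∃ s' > (0 : ℝ≥0∞), P.mul t s' ≤ P.one := by
  obtain ⟨s', hs'_pos, hs'_lt⟩ := exists_between (P.mul_pos hs P.one_pos)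
  exact ⟨s', hs'_pos, not_lt.1 fun h => (P.mul_one_le_of_one_le_mul hst h.le).not_gt hs'_lt⟩

end PseudoMul

theorem finite_tfae (P : PseudoMul) (hnd : P.O P.one = 0) (t : ℝ≥0∞) :
    [P.O t = 0,
     ∃ s > (0 : ℝ≥0∞), P.O (P.mul s t) = 0,
     ∃ s > (0 : ℝ≥0∞), P.mul s t ≤ P.one,
     ∃ s' > (0 : ℝ≥0∞), P.mul t s' ≤ P.one,
     ∃ s' > (0 : ℝ≥0∞), P.O (P.mul t s') = 0].TFAE := by
  tfae_have 1 → 3 := P.exists_mul_le_one_of_O_eq_zero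
  tfae_have 3 → 2
  | ⟨s, hs, hst⟩ => ⟨s, hs, P.O_eq_zero_of_le_one hnd hst⟩
  tfae_have 2 → 1
  | ⟨s, hs, h⟩ => nonpos_iff_eq_zero.1 (h ▸ P.O_le_O_mul hs t)
  tfae_have 3 → 4
  | ⟨s, hs, hst⟩ => P.exists_mul_right_le_one hs hst
  tfae_have 4 → 5
  | ⟨s', hs', hts'⟩ => ⟨s', hs', P.O_eq_zero_of_le_one hnd hts'⟩
  tfae_have 5 → 1
  | ⟨s', hs', h⟩ => by
    have hmul := nonpos_iff_eq_zero.1 (h ▸ P.mul_O_le_O_mul t s')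
    exact (P.eq_zero_of_mul _ _ hmul).resolve_right hs'.ne'
  tfae_finish
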